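/- For binary relations on a set of arguments constructed as above, the sixteen notions of justifiability collapse into the nine classes ordered by inclusion: a/* ⊆ d/* ⊆ {sa/sa = sa/su, u/su = u/u}, sa/sa ⊆ {sa/u = sa/d = sa/a, su/su}, u/u ⊆ {su/su, u/a = u/d = u/sa}, su/su ⊆ {su/u, su/sa}, and su/u, su/sa ⊆ su/a = su/d. -/

import Mathlib

/-!
`J_{x/y}` shrinks as `x` grows and grows with `y`, which gives every inclusion. The collapses rest
on one observation: a defender `C` of `B` that `B` attacks back (`x B C`) is superfluous, since `C`
is itself acceptable and hence comes with a defender against `B`. So `J_{x/y} = J_{x/(y - x⁻¹)}`,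
and every `y'` between `y - x⁻¹` and `y` yields the same semantics; for the relations built from
`u` and the symmetric `r`, the differences `y - x⁻¹` are computed case by case.
-/

/-- The set of `x/y`-acceptable arguments with respect to `S`. -/
def Facc {Arg : Type*} (x y : Arg → Arg → Prop) (S : Set Arg) : Set Arg :=
  {A | ∀ B, x B A → ∃ C ∈ S, y C B}

theorem Facc_mono {Arg : Type*} (x y : Arg → Arg → Prop) : Monotone (Facc x y) := by
  intro S T hST A hA B hB
  obtain ⟨C, hC, hCB⟩ := hA B hB
  exact ⟨C, hST hC, hCB⟩

/-- `Facc` as an order homomorphism. -/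
def Fhom {Arg : Type*} (x y : Arg → Arg → Prop) : Set Arg →o Set Arg :=
  ⟨Facc x y, Facc_mono x y⟩

/-- The least-fixpoint argumentation semantics: the set of `x/y`-justified arguments. -/
def Jlfp {Arg : Type*} (x y : Arg → Arg → Prop) : Set Arg :=
  OrderHom.lfp (Fhom x y)

section Semantics

variable {α : Type*} {x x' y y' z : α → α → Prop}

theorem Facc_Jlfp (x y : α → α → Prop) : Facc x y (Jlfp x y) = Jlfp x y :=
  OrderHom.map_lfp (Fhom x y)

theorem Jlfp_mono (hx : x' ≤ x) (hy : y ≤ y') : Jlfp x y ⊆ Jlfp x' y' :=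
  OrderHom.lfp.monotone fun _ _ hA B hB =>
    let ⟨C, hC, hCB⟩ := hA B (hx B _ hB)
    ⟨C, hC, hy C B hCB⟩

theorem Jlfp_sdiff_flip : Jlfp x (y \ flip x) = Jlfp x y := by
  refine (Jlfp_mono le_rfl sdiff_le).antisymm (OrderHom.lfp_le _ ?_)
  intro A hA
  rw [← Facc_Jlfp]
  intro B hB
  obtain ⟨C, hC, hCB⟩ := hA B hB
  by_cases hBC : x B C
  · rw [← Facc_Jlfp] at hC
    exact hC B hBC
  · exact ⟨C, hC, hCB, hBC⟩

theorem Jlfp_eq_of_le_of_sdiff_flip_le (hyz : y ≤ z) (hzy : z \ flip x ≤ y) :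
    Jlfp x y = Jlfp x z :=
  (Jlfp_mono le_rfl hyz).antisymm <| by
    simpa only [Jlfp_sdiff_flip] using Jlfp_mono (x := x) le_rfl hzy

end Semantics

section Relations

theorem sdiff_iff_and_not (p q : Prop) : p \ q ↔ p ∧ ¬q := Iff.rfl

variable {α : Type*} (u r : α → α → Prop)

def attack : α → α → Prop := u ⊔ r

def defeat : α → α → Prop := u ⊔ r \ flip u

def strictAttack : α → α → Prop := attack u r \ flip u

def strictUndercut : α → α → Prop := u \ flip u

theorem strictUndercut_le_undercut : strictUndercut u ≤ u := sdiff_le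

theorem strictUndercut_le_strictAttack : strictUndercut u ≤ strictAttack u r :=
  sdiff_le_sdiff_right le_sup_left

theorem undercut_le_defeat : u ≤ defeat u r := le_sup_left

theorem undercut_le_attack : u ≤ attack u r := le_sup_left

theorem strictAttack_le_attack : strictAttack u r ≤ attack u r := sdiff_le

theorem defeat_le_attack : defeat u r ≤ attack u r := sup_le_sup_left sdiff_le u

theorem strictAttack_le_defeat : strictAttack u r ≤ defeat u r := by
  intro A B
  simp only [strictAttack, defeat, attack, Pi.sup_apply, Pi.sdiff_apply, sup_Prop_eq,
    sdiff_iff_and_not, le_Prop_eq]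
  tauto

theorem attack_sdiff_flip_strictUndercut_le :
    attack u r \ flip (strictUndercut u) ≤ defeat u r := by
  intro A B
  simp only [attack, defeat, strictUndercut, flip, Pi.sup_apply, Pi.sdiff_apply, sup_Prop_eq,
    sdiff_iff_and_not, le_Prop_eq]
  tauto

variable {u r}

theorem attack_sdiff_flip_defeat_le (hr : ∀ A B, r A B → r B A) :
    attack u r \ flip (defeat u r) ≤ strictUndercut u := by
  intro A B
  have := hr A B
  simp only [attack, defeat, strictUndercut, flip, Pi.sup_apply, Pi.sdiff_apply, sup_Prop_eq,
    sdiff_iff_and_not, le_Prop_eq]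
  tauto

theorem strictAttack_sdiff_flip_strictAttack_le (hr : ∀ A B, r A B → r B A) :
    strictAttack u r \ flip (strictAttack u r) ≤ strictUndercut u := by
  intro A B
  have := hr A B
  simp only [strictAttack, attack, strictUndercut, flip, Pi.sup_apply, Pi.sdiff_apply,
    sup_Prop_eq, sdiff_iff_and_not, le_Prop_eq]
  tauto

theorem attack_sdiff_flip_strictAttack_le (hr : ∀ A B, r A B → r B A) :
    attack u r \ flip (strictAttack u r) ≤ u := by
  intro A B
  have := hr A B
  simp only [strictAttack, attack, flip, Pi.sup_apply, Pi.sdiff_apply, sup_Prop_eq,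
    sdiff_iff_and_not, le_Prop_eq]
  tauto

end Relations

section Collapses

variable {α : Type*} {u r x : α → α → Prop}

theorem Jlfp_collapse_of_defeat_le (hr : ∀ A B, r A B → r B A) (hx : defeat u r ≤ x) :
    Jlfp x (strictUndercut u) = Jlfp x u ∧ Jlfp x u = Jlfp x (attack u r) ∧
      Jlfp x (attack u r) = Jlfp x (defeat u r) ∧
      Jlfp x (defeat u r) = Jlfp x (strictAttack u r) := by
  have key {y : α → α → Prop} (hy₀ : strictUndercut u ≤ y) (hy₁ : y ≤ attack u r) :
      Jlfp x y = Jlfp x (attack u r) :=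
    Jlfp_eq_of_le_of_sdiff_flip_le hy₁ <|
      ((sdiff_le_sdiff_left fun A B => hx B A).trans (attack_sdiff_flip_defeat_le hr)).trans hy₀
  have hSU_U := strictUndercut_le_undercut u
  have hSU := key le_rfl (hSU_U.trans (undercut_le_attack u r))
  have hU := key hSU_U (undercut_le_attack u r)
  have hD := key (hSU_U.trans (undercut_le_defeat u r)) (defeat_le_attack u r)
  have hSA := key (strictUndercut_le_strictAttack u r) (strictAttack_le_attack u r)
  exact ⟨hSU.trans hU.symm, hU, hD.symm, hD.trans hSA.symm⟩

theorem Jlfp_strictAttack_strictAttack (hr : ∀ A B, r A B → r B A) :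
    Jlfp (strictAttack u r) (strictAttack u r) = Jlfp (strictAttack u r) (strictUndercut u) :=
  (Jlfp_eq_of_le_of_sdiff_flip_le (strictUndercut_le_strictAttack u r)
    (strictAttack_sdiff_flip_strictAttack_le hr)).symm

theorem Jlfp_strictAttack_collapse (hr : ∀ A B, r A B → r B A) :
    Jlfp (strictAttack u r) u = Jlfp (strictAttack u r) (defeat u r) ∧
      Jlfp (strictAttack u r) (defeat u r) = Jlfp (strictAttack u r) (attack u r) := by
  have key {y : α → α → Prop} (hy₀ : u ≤ y) (hy₁ : y ≤ attack u r) :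
      Jlfp (strictAttack u r) y = Jlfp (strictAttack u r) (attack u r) :=
    Jlfp_eq_of_le_of_sdiff_flip_le hy₁ ((attack_sdiff_flip_strictAttack_le hr).trans hy₀)
  have hD := key (undercut_le_defeat u r) (defeat_le_attack u r)
  exact ⟨(key le_rfl (undercut_le_attack u r)).trans hD.symm, hD⟩

theorem Jlfp_undercut_collapse :
    Jlfp u (attack u r) = Jlfp u (defeat u r) ∧
      Jlfp u (defeat u r) = Jlfp u (strictAttack u r) := by
  have key {y : α → α → Prop} (hy₀ : strictAttack u r ≤ y) (hy₁ : y ≤ attack u r) :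
      Jlfp u y = Jlfp u (attack u r) :=
    Jlfp_eq_of_le_of_sdiff_flip_le hy₁ hy₀
  have hD := key (strictAttack_le_defeat u r) (defeat_le_attack u r)
  exact ⟨hD.symm, hD.trans (key le_rfl (strictAttack_le_attack u r)).symm⟩

theorem Jlfp_strictUndercut_attack :
    Jlfp (strictUndercut u) (attack u r) = Jlfp (strictUndercut u) (defeat u r) :=
  (Jlfp_eq_of_le_of_sdiff_flip_le (defeat_le_attack u r)
    (attack_sdiff_flip_strictUndercut_le u r)).symm

end Collapses

/-- The hierarchy of notions of justifiability: the sixteen notions collapse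
into nine classes ordered by inclusion. -/
theorem justifiability_hierarchy {Arg : Type*} (u r a d sa su : Arg → Arg → Prop)
    (hr : ∀ A B, r A B → r B A)
    (ha : ∀ A B, a A B ↔ u A B ∨ r A B)
    (hd : ∀ A B, d A B ↔ u A B ∨ (r A B ∧ ¬ u B A))
    (hsa : ∀ A B, sa A B ↔ a A B ∧ ¬ u B A)
    (hsu : ∀ A B, su A B ↔ u A B ∧ ¬ u B A) :
    -- collapsing equalities
    (Jlfp a su = Jlfp a u ∧ Jlfp a u = Jlfp a a ∧ Jlfp a a = Jlfp a d ∧ Jlfp a d = Jlfp a sa) ∧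
    (Jlfp d su = Jlfp d u ∧ Jlfp d u = Jlfp d a ∧ Jlfp d a = Jlfp d d ∧ Jlfp d d = Jlfp d sa) ∧
    (Jlfp sa sa = Jlfp sa su) ∧
    (Jlfp u su = Jlfp u u) ∧
    (Jlfp sa u = Jlfp sa d ∧ Jlfp sa d = Jlfp sa a) ∧
    (Jlfp u a = Jlfp u d ∧ Jlfp u d = Jlfp u sa) ∧
    (Jlfp su a = Jlfp su d) ∧
    -- inclusions
    (Jlfp a a ⊆ Jlfp d d) ∧
    (Jlfp d d ⊆ Jlfp sa sa) ∧ (Jlfp d d ⊆ Jlfp u u) ∧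
    (Jlfp sa sa ⊆ Jlfp sa u) ∧ (Jlfp sa sa ⊆ Jlfp su su) ∧
    (Jlfp u u ⊆ Jlfp su su) ∧ (Jlfp u u ⊆ Jlfp u a) ∧
    (Jlfp su su ⊆ Jlfp su u) ∧ (Jlfp su su ⊆ Jlfp su sa) ∧
    (Jlfp su u ⊆ Jlfp su a) ∧ (Jlfp su sa ⊆ Jlfp su a) := by
  obtain rfl : a = attack u r := funext₂ fun A B => propext (ha A B)
  obtain rfl : d = defeat u r := funext₂ fun A B => propext (hd A B)
  obtain rfl : sa = strictAttack u r := funext₂ fun A B => propext (hsa A B)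
  obtain rfl : su = strictUndercut u := funext₂ fun A B => propext (hsu A B)
  obtain ⟨hA₁, hA₂, hA₃, hA₄⟩ := Jlfp_collapse_of_defeat_le hr (defeat_le_attack u r)
  obtain ⟨hD₁, hD₂, hD₃, hD₄⟩ := Jlfp_collapse_of_defeat_le hr (le_refl (defeat u r))
  have hSA := Jlfp_strictAttack_strictAttack (u := u) hr
  have hU : Jlfp u (strictUndercut u) = Jlfp u u := Jlfp_sdiff_flip
  refine ⟨⟨hA₁, hA₂, hA₃, hA₄⟩, ⟨hD₁, hD₂, hD₃, hD₄⟩, hSA, hU, Jlfp_strictAttack_collapse hr,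
    Jlfp_undercut_collapse, Jlfp_strictUndercut_attack, ?_, ?_, ?_, ?_, ?_, ?_, ?_, ?_, ?_, ?_, ?_⟩
  · exact hA₃.trans_subset (Jlfp_mono (defeat_le_attack u r) le_rfl)
  · exact hD₄.trans_subset (Jlfp_mono (strictAttack_le_defeat u r) le_rfl)
  · exact (hD₂.trans hD₃).symm.trans_subset (Jlfp_mono (undercut_le_defeat u r) le_rfl)
  · exact hSA.trans_subset (Jlfp_mono le_rfl (strictUndercut_le_undercut u))
  · exact hSA.trans_subset (Jlfp_mono (strictUndercut_le_strictAttack u r) le_rfl)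
  · exact hU.symm.trans_subset (Jlfp_mono (strictUndercut_le_undercut u) le_rfl)
  · exact Jlfp_mono le_rfl (undercut_le_attack u r)
  · exact Jlfp_mono le_rfl (strictUndercut_le_undercut u)
  · exact Jlfp_mono le_rfl (strictUndercut_le_strictAttack u r)
  · exact Jlfp_mono le_rfl (undercut_le_attack u r)
  · exact Jlfp_mono le_rfl (strictAttack_le_attack u r)
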